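/- arXiv:2011.05549 — 2 statements merged into one kernel-verified Lean document; each statement's English description precedes it below -/
import Mathlib

section
/- Let T be a finite set of tokens, d : T → ℝ≥0, and γ ∈ (0,1]. Define G(S,γ) = Σ_{t∈T} d(t)·log((m_S(t)+γ)/γ) on multisets S over T. Then G is submodular over multisets: for multisets S₁ ⊆ S₂ and any additional multiset q, G(S₁ ⊎ q, γ) − G(S₁, γ) ≥ G(S₂ ⊎ q, γ) − G(S₂, γ), where ⊎ denotes multiset union (addition of multiplicities). -/
open Finset

/-- The smoothed log-count objective, multisets over `T` represented by
multiplicity functions `S : T → ℕ`. -/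
noncomputable def G {T : Type*} [Fintype T] (d : T → ℝ) (S : T → ℕ) (γ : ℝ) : ℝ :=
  ∑ t, d t * Real.log ((S t + γ) / γ)

-- `log (x + k) - log x = log (1 + k / x)`, and `k / x` decreases in `x`.
lemma Real.log_add_sub_log_le_of_le {a b k : ℝ} (ha : 0 < a) (hab : a ≤ b) (hk : 0 ≤ k) :
    Real.log (b + k) - Real.log b ≤ Real.log (a + k) - Real.log a := by
  have hb : 0 < b := ha.trans_le hab
  rw [← Real.log_div (by positivity) hb.ne', ← Real.log_div (by positivity) ha.ne',
    add_div, add_div, div_self hb.ne', div_self ha.ne']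
  gcongr

lemma G_add_sub_G {T : Type*} [Fintype T] (d : T → ℝ) (S q : T → ℕ) {γ : ℝ} (hγ : 0 < γ) :
    G d (fun t => S t + q t) γ - G d S γ =
      ∑ t, d t * (Real.log ((S t : ℝ) + γ + q t) - Real.log (S t + γ)) := by
  simp only [G, ← sum_sub_distrib, ← mul_sub]
  refine sum_congr rfl fun t _ => ?_
  rw [Real.log_div (by positivity) hγ.ne', Real.log_div (by positivity) hγ.ne']
  push_cast
  rw [add_right_comm (S t : ℝ)]
  ring

theorem G_submodular_general {T : Type*} [Fintype T]
    (d : T → ℝ) (hd : ∀ t, 0 ≤ d t)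
    (γ : ℝ) (hγ0 : 0 < γ)
    (S₁ S₂ q : T → ℕ) (hsub : ∀ t, S₁ t ≤ S₂ t) :
    G d (fun t => S₂ t + q t) γ - G d S₂ γ ≤
      G d (fun t => S₁ t + q t) γ - G d S₁ γ := by
  rw [G_add_sub_G d S₁ q hγ0, G_add_sub_G d S₂ q hγ0]
  refine sum_le_sum fun t _ => mul_le_mul_of_nonneg_left ?_ (hd t)
  exact Real.log_add_sub_log_le_of_le (by positivity) (by gcongr; exact hsub t) (by positivity)

theorem G_submodular {T : Type*} [Fintype T]
    (d : T → ℝ) (hd : ∀ t, 0 ≤ d t)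
    (γ : ℝ) (hγ0 : 0 < γ) (hγ1 : γ ≤ 1)
    (S₁ S₂ q : T → ℕ) (hsub : ∀ t, S₁ t ≤ S₂ t) :
    G d (fun t => S₂ t + q t) γ - G d S₂ γ ≤
      G d (fun t => S₁ t + q t) γ - G d S₁ γ :=
  G_submodular_general d hd γ hγ0 S₁ S₂ q hsub
end

section
/- Let T be a finite set of tokens, and let S₁, S₂ be multisets over T such that the support of S₁ is strictly contained in the support of S₂ (every token appearing in S₁ appears in S₂, and some token appears in S₂ but not in S₁). Let d : T → ℝ>0 be a strictly positive probability distribution on T, and define G(S,γ) = Σ_{t∈T} d(t)·log((m_S(t)+γ)/γ). Then there exists ε > 0 such that for all γ ∈ (0, ε), G(S₁,γ) < G(S₂,γ). -/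
/-!
For a token `t₀` in the support of `S₂` but not of `S₁`, the
`t₀`-term of `G d S₂ γ - G d S₁ γ` is `d t₀ * log ((S₂ t₀ + γ) / γ) ≥ -d t₀ * log γ`, which
tends to `+∞` as `γ → 0⁺`. Every other term `d t * (log (S₂ t + γ) - log (S₁ t + γ))` is
bounded below by `-d t * log (S₁ t + 1)` for `γ ≤ 1`, uniformly in `γ`.
-/

open Finset

open Real Filter Topology

lemma neg_log_le_log_add_div_self {n : ℕ} (hn : 0 < n) {γ : ℝ} (hγ : 0 < γ) :
    -log γ ≤ log ((n + γ) / γ) := by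
  have hn' : (1 : ℝ) ≤ n := by exact_mod_cast hn
  rw [log_div (by positivity) hγ.ne']
  linarith [log_nonneg (by linarith : (1 : ℝ) ≤ n + γ)]

lemma neg_log_add_one_le_log_sub_log {m n : ℕ} (hmn : 0 < m → 0 < n) {γ : ℝ} (hγ : 0 < γ)
    (hγ₁ : γ ≤ 1) : -log (m + 1) ≤ log ((n + γ) / γ) - log ((m + γ) / γ) := by
  rw [log_div (by positivity) hγ.ne', log_div (by positivity) hγ.ne']
  rcases Nat.eq_zero_or_pos m with rfl | hm
  · have : log γ ≤ log (n + γ) := log_le_log hγ (by linarith [n.cast_nonneg (α := ℝ)])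
    simp only [Nat.cast_zero, zero_add, log_one]
    linarith
  · have hn : (1 : ℝ) ≤ n := by exact_mod_cast hmn hm
    have : log (m + γ) ≤ log (m + 1) := log_le_log (by positivity) (by linarith)
    linarith [log_nonneg (by linarith : (1 : ℝ) ≤ n + γ)]

section

variable {T : Type*} [Fintype T] {d : T → ℝ} {S₁ S₂ : T → ℕ} {t₀ : T}

lemma le_G_sub_G (hd : ∀ t, 0 ≤ d t) (hsub : ∀ t, 0 < S₁ t → 0 < S₂ t) (h₁ : S₁ t₀ = 0)
    (h₂ : 0 < S₂ t₀) {γ : ℝ} (hγ : 0 < γ) (hγ₁ : γ ≤ 1) :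
    d t₀ * -log γ - ∑ t, d t * log (S₁ t + 1) ≤ G d S₂ γ - G d S₁ γ := by
  classical
  -- the `t₀`-bonus is written as an indicator so that the estimate can be summed termwise
  have hterm : ∀ t, (if t = t₀ then d t₀ * -log γ else 0) + d t * -log (S₁ t + 1) ≤
      d t * log ((S₂ t + γ) / γ) - d t * log ((S₁ t + γ) / γ) := by
    intro t
    rw [← mul_sub]
    split_ifs with ht
    · subst ht
      simp only [h₁, Nat.cast_zero, zero_add, log_one, neg_zero, mul_zero, add_zero,
        div_self hγ.ne', sub_zero]
      exact mul_le_mul_of_nonneg_left (neg_log_le_log_add_div_self h₂ hγ) (hd t)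
    · rw [zero_add]
      exact mul_le_mul_of_nonneg_left (neg_log_add_one_le_log_sub_log (hsub t) hγ hγ₁) (hd t)
  calc d t₀ * -log γ - ∑ t, d t * log (S₁ t + 1)
      = ∑ t, ((if t = t₀ then d t₀ * -log γ else 0) + d t * -log (S₁ t + 1)) := by
        simp only [sum_add_distrib, sum_ite_eq', mem_univ, if_true, mul_neg, sum_neg_distrib,
          sub_eq_add_neg]
    _ ≤ ∑ t, (d t * log ((S₂ t + γ) / γ) - d t * log ((S₁ t + γ) / γ)) :=
        sum_le_sum fun t _ => hterm t
    _ = G d S₂ γ - G d S₁ γ := sum_sub_distrib ..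

lemma tendsto_G_sub_G_atTop (hd : ∀ t, 0 ≤ d t) (hsub : ∀ t, 0 < S₁ t → 0 < S₂ t)
    (h₁ : S₁ t₀ = 0) (h₂ : 0 < S₂ t₀) (hd₀ : 0 < d t₀) :
    Tendsto (fun γ => G d S₂ γ - G d S₁ γ) (𝓝[>] 0) atTop := by
  have hbound : Tendsto (fun γ => d t₀ * -log γ - ∑ t, d t * log (S₁ t + 1)) (𝓝[>] 0) atTop :=
    tendsto_atTop_add_const_right _ _
      ((tendsto_neg_atBot_atTop.comp tendsto_log_nhdsGT_zero).const_mul_atTop hd₀)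
  refine tendsto_atTop_mono' _ ?_ hbound
  filter_upwards [Ioc_mem_nhdsGT zero_lt_one] with γ ⟨hγ, hγ₁⟩
  exact le_G_sub_G hd hsub h₁ h₂ hγ hγ₁

end

theorem G_prefers_larger_support_general {T : Type*} [Fintype T]
    (d : T → ℝ) (hd : ∀ t, 0 < d t)
    (S₁ S₂ : T → ℕ)
    (hsupp : {t | 0 < S₁ t} ⊂ {t | 0 < S₂ t}) :
    ∃ ε > (0 : ℝ), ∀ γ : ℝ, 0 < γ → γ < ε → G d S₁ γ < G d S₂ γ := by
  obtain ⟨t₀, h₂, h₁⟩ := Set.exists_of_ssubset hsupp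
  have hsub : ∀ t, 0 < S₁ t → 0 < S₂ t := fun _ ht => hsupp.subset ht
  have hlim := tendsto_G_sub_G_atTop (fun t => (hd t).le) hsub (Nat.eq_zero_of_not_pos h₁) h₂
    (hd t₀)
  obtain ⟨ε, hε, hγ⟩ := (nhdsGT_basis (0 : ℝ)).eventually_iff.mp (hlim.eventually_gt_atTop 0)
  exact ⟨ε, hε, fun γ h₀ hε' => sub_pos.mp (hγ ⟨h₀, hε'⟩)⟩

theorem G_prefers_larger_support {T : Type*} [Fintype T]
    (d : T → ℝ) (hd : ∀ t, 0 < d t) (hsum : ∑ t, d t = 1)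
    (S₁ S₂ : T → ℕ)
    (hsupp : {t | 0 < S₁ t} ⊂ {t | 0 < S₂ t}) :
    ∃ ε > (0 : ℝ), ∀ γ : ℝ, 0 < γ → γ < ε → G d S₁ γ < G d S₂ γ :=
  G_prefers_larger_support_general d hd S₁ S₂ hsupp
end
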